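/- arXiv:math/0602545 — 3 statements merged into one kernel-verified Lean document; each statement's English description precedes it below -/
import Mathlib

section
/- Let D ⊆ ℝ^k be a nonempty closed set and let y ∈ ℝ^k with y ∉ D. Suppose there exists ρ > dist(y, D) such that every z ∈ ℝ^k with dist(z, D) ≤ ρ has a unique nearest point in D, and let p ∈ D be the unique nearest point to y (i.e., the unique p ∈ D with ‖y − p‖ = dist(y, D)). Then the distance function z ↦ dist(z, D) is Fréchet differentiable at y, and its gradient at y equals (y − p)/‖y − p‖. -/
/-!
The distance function is squeezed between two first-order approximations at `y`. From above,
`dist(z, D) ≤ ‖z - p‖`, with equality at `z = y`, and `z ↦ ‖z - p‖` has gradient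
`(y - p)/‖y - p‖` there. From below, if `q` is a nearest point of `z`, Cauchy–Schwarz gives
`dist(z, D) = ‖z - q‖ ≥ dist(y, D) + ⟪(y - q)/‖y - q‖, z - y⟫`. By compactness and the uniqueness
of the nearest point of `y`, `q → p` as `z → y`, so the two bounds agree to first order.
-/

open Metric Set Filter Topology
open scoped RealInnerProductSpace

section InnerProductSpace

variable {E : Type*} [NormedAddCommGroup E] [InnerProductSpace ℝ E]

theorem norm_sub_add_inner_le_norm_sub (y z q : E) :
    ‖y - q‖ + ⟪‖y - q‖⁻¹ • (y - q), z - y⟫ ≤ ‖z - q‖ := by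
  set u := ‖y - q‖⁻¹ • (y - q)
  have hu : ‖u‖ ≤ 1 := by
    rcases eq_or_ne (y - q) 0 with h | h
    · simp [u, h]
    · simp [u, norm_smul, h]
  have huyq : ⟪u, y - q⟫ = ‖y - q‖ := by
    rw [real_inner_smul_left, real_inner_self_eq_norm_mul_norm, ← mul_assoc]
    rcases eq_or_ne ‖y - q‖ 0 with h | h
    · simp [h]
    · rw [inv_mul_cancel₀ h, one_mul]
  calc ‖y - q‖ + ⟪u, z - y⟫ = ⟪u, z - q⟫ := by
        rw [← huyq, ← inner_add_right, sub_add_sub_cancel']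
    _ ≤ ‖u‖ * ‖z - q‖ := real_inner_le_norm _ _
    _ ≤ ‖z - q‖ := mul_le_of_le_one_left (norm_nonneg _) hu

variable [CompleteSpace E]

theorem hasGradientAt_norm_sub {y p : E} (h : y ≠ p) :
    HasGradientAt (fun z => ‖z - p‖) (‖y - p‖⁻¹ • (y - p)) y := by
  have hyp : ‖y - p‖ ≠ 0 := by simpa [sub_eq_zero] using h
  have hsq := ((hasFDerivAt_id y).sub_const p).norm_sq.sqrt (by simpa using hyp)
  simp only [id, Real.sqrt_sq (norm_nonneg _)] at hsq
  rw [hasGradientAt_iff_hasFDerivAt]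
  refine hsq.congr_fderiv ?_
  ext w
  simp only [one_div, mul_inv_rev, map_sub, ContinuousLinearMap.comp_id, smul_apply, sub_apply,
    coe_innerSL_apply, nsmul_eq_mul, Nat.cast_ofNat, smul_eq_mul, map_smul,
    InnerProductSpace.toDual_apply_apply]
  field_simp

theorem HasGradientAt.of_le_of_le_add_inner {f g : E → ℝ} {f' y : E} {u : E → E}
    (hf : HasGradientAt f f' y) (hgf : ∀ᶠ z in 𝓝 y, g z ≤ f z) (hfg : f y = g y)
    (hu : Tendsto u (𝓝 y) (𝓝 f')) (hgu : ∀ᶠ z in 𝓝 y, g y + ⟪u z, z - y⟫ ≤ g z) :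
    HasGradientAt g f' y := by
  rw [hasGradientAt_iff_isLittleO, Asymptotics.isLittleO_iff] at hf ⊢
  intro c hc
  have hu' : ∀ᶠ z in 𝓝 y, ‖u z - f'‖ ≤ c / 2 :=
    (tendsto_iff_norm_sub_tendsto_zero.1 hu).eventually (eventually_le_nhds (by positivity))
  filter_upwards [hf (half_pos hc), hgf, hgu, hu'] with z hfz hgfz hguz huz
  have hinner : -(c / 2 * ‖z - y‖) ≤ ⟪u z - f', z - y⟫ :=
    calc -(c / 2 * ‖z - y‖) ≤ -(‖u z - f'‖ * ‖z - y‖) := by gcongr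
      _ ≤ _ := neg_le_of_abs_le (abs_real_inner_le_norm _ _)
  rw [inner_sub_left] at hinner
  rw [Real.norm_eq_abs, abs_le] at hfz ⊢
  obtain ⟨hfz_lower, hfz_upper⟩ := hfz
  constructor <;> linarith

end InnerProductSpace

theorem tendsto_nearestPt_of_unique {X : Type*} [PseudoMetricSpace X] [ProperSpace X]
    {D : Set X} (hD : IsClosed D) {y p : X} (hp : ∀ q ∈ D, dist y q = infDist y D → q = p)
    {q : X → X} (hqD : ∀ z, q z ∈ D) (hq : ∀ z, infDist z D = dist z (q z)) :
    Tendsto q (𝓝 y) (𝓝 p) := by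
  have hdist : Tendsto (fun z => dist y (q z)) (𝓝 y) (𝓝 (infDist y D)) := by
    have hupper : Tendsto (fun z => dist y z + infDist z D) (𝓝 y) (𝓝 (infDist y D)) := by
      simpa using ((tendsto_const_nhds (x := y)).dist tendsto_id).add
        ((continuous_infDist_pt D).tendsto y)
    refine tendsto_of_tendsto_of_tendsto_of_le_of_le tendsto_const_nhds hupper
      (fun z => infDist_le_dist_of_mem (hqD z)) fun z => ?_
    rw [hq]
    exact dist_triangle _ _ _
  refine (isCompact_closedBall y (infDist y D + 1)).tendsto_nhds_of_unique_mapClusterPt ?_ ?_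
  · filter_upwards [hdist.eventually (eventually_le_nhds (lt_add_one _))] with z hz
    rwa [mem_closedBall, dist_comm]
  · intro x _ hx
    refine hp x (hD.mem_of_mapClusterPt hx (.of_forall hqD)) (eq_of_nhds_neBot ?_)
    exact (hx.tendsto_comp ((continuous_const.dist continuous_id).tendsto x)).clusterPt.mono hdist

theorem stmt6_general (k : ℕ) (D : Set (EuclideanSpace ℝ (Fin k))) (hD : IsClosed D)
    (y : EuclideanSpace ℝ (Fin k)) (hy : y ∉ D)
    (ρ : ℝ) (hρ : Metric.infDist y D < ρ)
    (huniq : ∀ z : EuclideanSpace ℝ (Fin k), Metric.infDist z D ≤ ρ →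
      ∃! q, q ∈ D ∧ dist z q = Metric.infDist z D)
    (p : EuclideanSpace ℝ (Fin k)) (hp : p ∈ D)
    (hpy : dist y p = Metric.infDist y D) :
    HasGradientAt (fun z => Metric.infDist z D) ((‖y - p‖)⁻¹ • (y - p)) y := by
  have hyp : y ≠ p := (ne_of_mem_of_not_mem hp hy).symm
  have hp_uniq : ∀ q ∈ D, dist y q = infDist y D → q = p := fun q hq hqy =>
    (huniq y hρ.le).unique ⟨hq, hqy⟩ ⟨hp, hpy⟩
  choose q hqD hq using hD.exists_infDist_eq_dist ⟨p, hp⟩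
  have hu : Tendsto (fun z => ‖y - q z‖⁻¹ • (y - q z)) (𝓝 y) (𝓝 (‖y - p‖⁻¹ • (y - p))) :=
    ((tendsto_const_nhds.sub tendsto_id).norm.inv₀ (by simpa [sub_eq_zero] using hyp)).smul
      (tendsto_const_nhds.sub tendsto_id) |>.comp (tendsto_nearestPt_of_unique hD hp_uniq hqD hq)
  refine (hasGradientAt_norm_sub hyp).of_le_of_le_add_inner (.of_forall fun z => ?_)
    (by rw [← dist_eq_norm, hpy]) hu (.of_forall fun z => ?_)
  · rw [← dist_eq_norm]
    exact infDist_le_dist_of_mem hp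
  · calc infDist y D + ⟪‖y - q z‖⁻¹ • (y - q z), z - y⟫
        ≤ ‖y - q z‖ + ⟪‖y - q z‖⁻¹ • (y - q z), z - y⟫ := by
          rw [← dist_eq_norm]
          gcongr
          exact infDist_le_dist_of_mem (hqD z)
      _ ≤ ‖z - q z‖ := norm_sub_add_inner_le_norm_sub y z (q z)
      _ = infDist z D := by rw [hq, dist_eq_norm]

theorem stmt6 (k : ℕ) (D : Set (EuclideanSpace ℝ (Fin k))) (hD : IsClosed D)
    (hne : D.Nonempty) (y : EuclideanSpace ℝ (Fin k)) (hy : y ∉ D)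
    (ρ : ℝ) (hρ : Metric.infDist y D < ρ)
    (huniq : ∀ z : EuclideanSpace ℝ (Fin k), Metric.infDist z D ≤ ρ →
      ∃! q, q ∈ D ∧ dist z q = Metric.infDist z D)
    (p : EuclideanSpace ℝ (Fin k)) (hp : p ∈ D)
    (hpy : dist y p = Metric.infDist y D) :
    HasGradientAt (fun z => Metric.infDist z D) ((‖y - p‖)⁻¹ • (y - p)) y :=
  stmt6_general k D hD y hy ρ hρ huniq p hp hpy
end

section
/- Let z ∈ ℝ^k be a unit vector, u ∈ ℝ, and let D_u = {x ∈ ℝ^k : ⟨x, z⟩ ≥ u} be the closed half-space. Then for every r ≥ 0, T(D_u, r) = D_{u−r}, and γ_{ℝ^k}(T(D_u, r)) = 1 − Φ(u) + Σ_{j=1}^∞ (r^j/j!) · (1/√(2π)) · H_{j−1}(u) · e^{−u²/2}, the series converging absolutely. -/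
/-! The `r`-tube of the half-space `⟪x, z⟫ ≥ u` is the half-space `⟪x, z⟫ ≥ u - r`, and the
image of the standard Gaussian measure under `x ↦ ⟪x, z⟫` is the standard normal law (compare
characteristic functions), so the excess mass of the tube is `∫_{u-r}^u φ = ∫_0^r φ(u - s) ds`.
By Rodrigues' formula `φ(u - s) = ∑ sⁿ/n! Hₙ(u) φ(u)`; as `φ` is entire this Taylor series
converges for every `s`, hence absolutely, and integrating it term by term gives the series. -/

open MeasureTheory Real
open scoped RealInnerProductSpace

/-- The standard Gaussian measure on `ℝ^k`, with density `(2π)^{-k/2} e^{-‖x‖²/2}`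
with respect to Lebesgue measure. -/
noncomputable def stdGaussian (k : ℕ) : Measure (EuclideanSpace ℝ (Fin k)) :=
  volume.withDensity fun x =>
    ENNReal.ofReal ((2 * π) ^ (-(k : ℝ) / 2) * Real.exp (-‖x‖ ^ 2 / 2))

/-- The closed tube (r-thickening) of a set. -/
def tube {k : ℕ} (A : Set (EuclideanSpace ℝ (Fin k))) (r : ℝ) :
    Set (EuclideanSpace ℝ (Fin k)) :=
  {y | Metric.infDist y A ≤ r}

/-- The `j`-th probabilists' Hermite polynomial, evaluated at `x`. -/
noncomputable def hermiteP (j : ℕ) (x : ℝ) : ℝ := Polynomial.aeval x (Polynomial.hermite j)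

/-- The standard normal cumulative distribution function. -/
noncomputable def stdNormalCDF (u : ℝ) : ℝ :=
  ∫ t in Set.Iic u, Real.exp (-t ^ 2 / 2) / Real.sqrt (2 * π)

open Module Polynomial
open ProbabilityTheory (gaussianReal gaussianPDFReal gaussianReal_apply_eq_integral
  gaussianPDFReal_nonneg)
open scoped Nat

section GaussianMeasure

open ProbabilityTheory

variable {V : Type*} [NormedAddCommGroup V] [InnerProductSpace ℝ V] [FiniteDimensional ℝ V]
  [MeasurableSpace V] [BorelSpace V]

variable (V) in
noncomputable def gaussianDensity (x : V) : ℝ :=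
  (2 * π) ^ (-(finrank ℝ V : ℝ) / 2) * exp (-‖x‖ ^ 2 / 2)

theorem integral_gaussianDensity : ∫ x, gaussianDensity V x = 1 := by
  have h := GaussianFourier.integral_rexp_neg_mul_sq_norm (V := V) (b := 1 / 2) (by norm_num)
  simp_rw [gaussianDensity, show ∀ x : V, -‖x‖ ^ 2 / 2 = -(1 / 2) * ‖x‖ ^ 2 from fun x => by ring]
  rw [integral_const_mul, h, show π / (1 / 2) = 2 * π by ring, ← rpow_add (by positivity)]
  ring_nf
  exact rpow_zero _

theorem charFun_withDensity_gaussianDensity (t : V) :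
    charFun (volume.withDensity fun x => ENNReal.ofReal (gaussianDensity V x)) t =
      Complex.exp (-‖t‖ ^ 2 / 2) := by
  rw [charFun_apply, integral_withDensity_eq_integral_toReal_smul
    (by unfold gaussianDensity; fun_prop)
    (ae_of_all _ fun _ => ENNReal.ofReal_lt_top)]
  have h := GaussianFourier.integral_cexp_neg_mul_sq_norm_add (V := V) (b := 1 / 2)
    (by norm_num) Complex.I t
  have hπ : (0 : ℝ) ≤ 2 * π := by positivity
  calc ∫ x, (ENNReal.ofReal (gaussianDensity V x)).toReal • Complex.exp (⟪x, t⟫ * Complex.I)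
      = ∫ x : V, ((2 * π : ℝ) : ℂ) ^ (-(finrank ℝ V : ℂ) / 2) *
          Complex.exp (-(1 / 2) * ‖x‖ ^ 2 + Complex.I * ⟪t, x⟫) := by
        refine integral_congr_ae (ae_of_all _ fun x => ?_)
        dsimp only
        rw [gaussianDensity, ENNReal.toReal_ofReal (by positivity), Complex.real_smul,
          Complex.ofReal_mul, Complex.ofReal_cpow hπ, Complex.ofReal_exp, mul_assoc,
          ← Complex.exp_add, real_inner_comm]
        push_cast
        ring_nf
    _ = Complex.exp (-‖t‖ ^ 2 / 2) := by
        rw [integral_const_mul, h, ← mul_assoc, neg_div, Complex.cpow_neg, ← Complex.ofReal_natCast]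
        push_cast
        rw [show (π : ℂ) / (1 / 2) = 2 * π by ring, inv_mul_cancel₀ (by simp [Real.pi_ne_zero]),
          one_mul, Complex.I_sq]
        ring_nf

theorem withDensity_gaussianDensity :
    volume.withDensity (fun x => ENNReal.ofReal (gaussianDensity V x)) = stdGaussian V := by
  have : IsFiniteMeasure (volume.withDensity fun x => ENNReal.ofReal (gaussianDensity V x)) :=
    isFiniteMeasure_withDensity_ofReal (Integrable.of_integral_ne_zero
      (integral_gaussianDensity.trans_ne one_ne_zero)).2
  refine Measure.ext_of_charFun (funext fun t => ?_)
  rw [charFun_withDensity_gaussianDensity, charFun_stdGaussian]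

theorem map_inner_stdGaussian (z : V) :
    (stdGaussian V).map (fun x => ⟪x, z⟫) = gaussianReal 0 (‖z‖₊ ^ 2) := by
  have h := IsGaussian.map_eq_gaussianReal (μ := stdGaussian V) (innerSL ℝ z)
  rw [integral_strongDual_stdGaussian, variance_dual_stdGaussian, innerSL_apply_norm] at h
  convert h using 2
  · ext x
    exact real_inner_comm _ _
  · ext
    simp

end GaussianMeasure

section HalfSpace

variable {V : Type*} [NormedAddCommGroup V] [InnerProductSpace ℝ V]

theorem infDist_halfSpace {z : V} (hz : ‖z‖ = 1) (u : ℝ) (y : V) :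
    Metric.infDist y {x | u ≤ ⟪x, z⟫} = max (u - ⟪y, z⟫) 0 := by
  set c := max (u - ⟪y, z⟫) 0
  have hc : 0 ≤ c := le_max_right _ _
  have hmem : y + c • z ∈ {x | u ≤ ⟪x, z⟫} := by
    change u ≤ ⟪y + c • z, z⟫
    rw [inner_add_left, real_inner_smul_left, real_inner_self_eq_norm_sq, hz]
    linarith [le_max_left (u - ⟪y, z⟫) 0]
  refine le_antisymm ?_ (le_of_not_gt fun hlt => ?_)
  · calc Metric.infDist y _ ≤ dist y (y + c • z) := Metric.infDist_le_dist_of_mem hmem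
      _ = c := by rw [dist_self_add_right, norm_smul, hz, mul_one, norm_of_nonneg hc]
  · obtain ⟨x, hx, hxy⟩ := (Metric.infDist_lt_iff ⟨_, hmem⟩).1 hlt
    have hux : u - ⟪y, z⟫ ≤ dist y x :=
      calc u - ⟪y, z⟫ ≤ ⟪x - y, z⟫ := by rw [inner_sub_left]; linarith [hx.out]
        _ ≤ ‖x - y‖ * ‖z‖ := real_inner_le_norm _ _
        _ = dist y x := by rw [hz, mul_one, dist_comm, dist_eq_norm]
    exact hxy.not_ge (max_le hux dist_nonneg)

end HalfSpace

theorem tube_halfSpace {k : ℕ} {z : EuclideanSpace ℝ (Fin k)} (hz : ‖z‖ = 1) (u : ℝ) {r : ℝ}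
    (hr : 0 ≤ r) : tube {x | u ≤ ⟪x, z⟫} r = {x | u - r ≤ ⟪x, z⟫} := by
  ext y
  change Metric.infDist y _ ≤ r ↔ u - r ≤ ⟪y, z⟫
  rw [infDist_halfSpace hz, max_le_iff]
  exact ⟨fun h => by linarith [h.1], fun h => ⟨by linarith, hr⟩⟩

theorem stdGaussian_halfSpace {k : ℕ} {z : EuclideanSpace ℝ (Fin k)} (hz : ‖z‖ = 1) (v : ℝ) :
    stdGaussian k {x | v ≤ ⟪x, z⟫} = gaussianReal 0 1 (Set.Ici v) := by
  have h := withDensity_gaussianDensity (V := EuclideanSpace ℝ (Fin k))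
  simp only [gaussianDensity, finrank_euclideanSpace_fin] at h
  have hmap := map_inner_stdGaussian z
  rw [show ‖z‖₊ = 1 from NNReal.coe_eq_one.1 hz, one_pow] at hmap
  rw [stdGaussian, h, ← hmap, Measure.map_apply (by fun_prop) measurableSet_Ici]
  rfl

section HermiteSeries

theorem iteratedDeriv_cexp_neg_sq_div_two (n : ℕ) :
    iteratedDeriv n (fun z : ℂ => Complex.exp (-z ^ 2 / 2)) =
      fun z => (-1) ^ n * aeval z (hermite n) * Complex.exp (-z ^ 2 / 2) := by
  induction n with
  | zero => simp
  | succ n ih =>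
    ext z
    have hexp : HasDerivAt (fun w : ℂ => Complex.exp (-w ^ 2 / 2))
        (Complex.exp (-z ^ 2 / 2) * -z) z :=
      (((hasDerivAt_id' z).fun_pow 2).fun_neg.div_const 2).cexp.congr_deriv (by ring)
    have hpoly := (hermite n).hasDerivAt_aeval z
    rw [iteratedDeriv_succ, ih, ((hpoly.const_mul ((-1) ^ n)).fun_mul hexp).deriv, hermite_succ,
      map_sub, map_mul, aeval_X, pow_succ]
    ring

theorem hasSum_hermite_mul_exp (u s : ℝ) :
    HasSum (fun n => s ^ n / n ! * (aeval u (hermite n) * exp (-u ^ 2 / 2)))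
      (exp (-(u - s) ^ 2 / 2)) := by
  have h := Complex.hasSum_taylorSeries_of_entire
    (f := fun z : ℂ => Complex.exp (-z ^ 2 / 2)) (by fun_prop) u (u - s)
  rw [← Complex.hasSum_ofReal]
  convert h using 1
  · rfl
  · ext n
    have hH : aeval (u : ℂ) (hermite n) = aeval u (hermite n) := by
      rw [← Complex.coe_algebraMap, aeval_algebraMap_apply]
    rw [iteratedDeriv_cexp_neg_sq_div_two, smul_eq_mul, smul_eq_mul, sub_sub_cancel_left,
      neg_pow]
    dsimp only
    rw [hH]
    push_cast
    ring_nf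
    rw [pow_mul', neg_one_sq, one_pow, mul_one]
  · push_cast
    ring_nf

end HermiteSeries

section TermwiseIntegration

variable {b : ℕ → ℝ}

theorem summable_abs_pow_div_factorial_mul (hb : ∀ t : ℝ, Summable fun n => t ^ n / n ! * b n)
    (s : ℝ) : Summable fun n => |s ^ n / n ! * b n| := by
  set t := |s| + 1
  have ht : 0 < t := by positivity
  obtain ⟨C, hC⟩ := ((hb t).tendsto_atTop_zero.abs.bddAbove_range)
  have hq : |s| / t < 1 := (div_lt_one ht).2 (lt_add_one _)
  refine .of_nonneg_of_le (fun n => abs_nonneg _) (fun n => ?_)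
    ((summable_geometric_of_lt_one (by positivity) hq).mul_left C)
  calc |s ^ n / n ! * b n| = |t ^ n / n ! * b n| * (|s| / t) ^ n := by
        rw [abs_mul, abs_mul, abs_div, abs_div, abs_pow, abs_pow, abs_of_pos ht, div_pow]
        field_simp
    _ ≤ C * (|s| / t) ^ n := by
        gcongr
        exact hC ⟨n, rfl⟩

theorem summable_abs_pow_succ_div_factorial_mul
    (hb : ∀ t : ℝ, Summable fun n => t ^ n / n ! * b n) {r : ℝ} (hr : 0 ≤ r) :
    Summable fun n => |r ^ (n + 1) / (n + 1)! * b n| := by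
  refine .of_nonneg_of_le (fun n => abs_nonneg _) (fun n => ?_)
    ((summable_abs_pow_div_factorial_mul hb r).mul_left r)
  calc |r ^ (n + 1) / (n + 1)! * b n| = r / (n + 1) * |r ^ n / n ! * b n| := by
        rw [abs_mul, abs_mul, abs_of_nonneg (div_nonneg (pow_nonneg hr _) (by positivity)),
          abs_of_nonneg (div_nonneg (pow_nonneg hr _) (by positivity)), pow_succ,
          Nat.factorial_succ]
        push_cast
        field_simp
    _ ≤ r * |r ^ n / n ! * b n| := by
        gcongr
        exact div_le_self hr (by linarith)

theorem integral_pow_div_factorial (n : ℕ) (r : ℝ) :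
    ∫ s in (0 : ℝ)..r, s ^ n / n ! = r ^ (n + 1) / (n + 1)! := by
  rw [intervalIntegral.integral_div, integral_pow, Nat.factorial_succ]
  push_cast
  field_simp
  ring

theorem hasSum_integral_pow_succ_div_factorial_mul {f : ℝ → ℝ}
    (hf : ∀ t, HasSum (fun n => t ^ n / n ! * b n) (f t)) {r : ℝ} (hr : 0 ≤ r) :
    HasSum (fun n => r ^ (n + 1) / (n + 1)! * b n) (∫ s in (0 : ℝ)..r, f s) := by
  set F : ℕ → ℝ → ℝ := fun n s => s ^ n / n ! * b n
  have hF : ∀ n, ∫ s in Set.Ioc 0 r, F n s = r ^ (n + 1) / (n + 1)! * b n := fun n => by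
    rw [integral_mul_const, ← intervalIntegral.integral_of_le hr, integral_pow_div_factorial]
  have hnorm : ∀ n, ∫ s in Set.Ioc 0 r, ‖F n s‖ = |r ^ (n + 1) / (n + 1)! * b n| := fun n => by
    have h : ∀ s ∈ Set.Ioc 0 r, ‖F n s‖ = s ^ n / n ! * |b n| := fun s hs => by
      simp only [F, norm_mul, norm_div, norm_pow, Real.norm_eq_abs, abs_of_nonneg hs.1.le,
        Nat.abs_cast]
    rw [setIntegral_congr_fun measurableSet_Ioc h, integral_mul_const,
      ← intervalIntegral.integral_of_le hr, integral_pow_div_factorial, abs_mul,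
      abs_of_nonneg (div_nonneg (pow_nonneg hr _) (by positivity))]
  have h := hasSum_integral_of_summable_integral_norm
    (μ := volume.restrict (Set.Ioc 0 r)) (F := F)
    (fun n => Continuous.integrableOn_Ioc (by fun_prop))
    (by simpa only [hnorm] using
      summable_abs_pow_succ_div_factorial_mul (fun t => (hf t).summable) hr)
  have hsum : ∀ s, ∑' n, F n s = f s := fun s => (hf s).tsum_eq
  simp only [hF, hsum] at h
  rwa [intervalIntegral.integral_of_le hr]

end TermwiseIntegration

theorem gaussianPDFReal_zero_one (t : ℝ) :
    gaussianPDFReal 0 1 t = exp (-t ^ 2 / 2) / √(2 * π) := by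
  simp [gaussianPDFReal, div_eq_inv_mul]

theorem hasSum_hermite_mul_gaussianPDFReal (u s : ℝ) :
    HasSum (fun n => s ^ n / n ! * (1 / √(2 * π) * hermiteP n u * exp (-u ^ 2 / 2)))
      (gaussianPDFReal 0 1 (u - s)) := by
  rw [gaussianPDFReal_zero_one, div_eq_inv_mul (exp _), inv_eq_one_div]
  refine ((hasSum_hermite_mul_exp u s).mul_left (1 / √(2 * π))).congr_fun fun n => ?_
  rw [hermiteP]
  ring

theorem stdNormalCDF_eq_gaussianReal (u : ℝ) :
    stdNormalCDF u = (gaussianReal 0 1).real (Set.Iic u) := by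
  rw [measureReal_def, gaussianReal_apply_eq_integral _ one_ne_zero,
    ENNReal.toReal_ofReal (integral_nonneg fun _ => gaussianPDFReal_nonneg _ _ _)]
  simp only [gaussianPDFReal_zero_one, stdNormalCDF]

theorem measureReal_Icc_eq {μ : Measure ℝ} [IsProbabilityMeasure μ] {a b : ℝ} (hab : a ≤ b) :
    μ.real (Set.Icc a b) = μ.real (Set.Ici a) - (1 - μ.real (Set.Iic b)) := by
  have h := measureReal_union_add_inter (μ := μ) (s := Set.Ici a) (measurableSet_Iic (a := b))
  rw [Set.union_comm, Set.Iic_union_Ici_of_le hab, Set.Ici_inter_Iic, probReal_univ] at h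
  linarith

theorem gaussianReal_real_Icc (μ : ℝ) {v : NNReal} (hv : v ≠ 0) {a b : ℝ} (hab : a ≤ b) :
    (gaussianReal μ v).real (Set.Icc a b) = ∫ t in a..b, gaussianPDFReal μ v t := by
  rw [measureReal_def, gaussianReal_apply_eq_integral _ hv,
    ENNReal.toReal_ofReal (integral_nonneg fun _ => gaussianPDFReal_nonneg _ _ _),
    integral_Icc_eq_integral_Ioc, intervalIntegral.integral_of_le hab]

theorem stmt7 (k : ℕ) (z : EuclideanSpace ℝ (Fin k)) (hz : ‖z‖ = 1) (u : ℝ)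
    (r : ℝ) (hr : 0 ≤ r) :
    tube {x | u ≤ ⟪x, z⟫} r = {x | u - r ≤ ⟪x, z⟫} ∧
    Summable (fun j : ℕ =>
      |r ^ (j + 1) / ((j + 1).factorial : ℝ) *
        ((1 / Real.sqrt (2 * π)) * hermiteP j u * Real.exp (-u ^ 2 / 2))|) ∧
    HasSum (fun j : ℕ =>
      r ^ (j + 1) / ((j + 1).factorial : ℝ) *
        ((1 / Real.sqrt (2 * π)) * hermiteP j u * Real.exp (-u ^ 2 / 2)))
      ((stdGaussian k (tube {x | u ≤ ⟪x, z⟫} r)).toReal - (1 - stdNormalCDF u)) := by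
  have htube := tube_halfSpace hz u hr
  have hseries := hasSum_hermite_mul_gaussianPDFReal u
  refine ⟨htube, summable_abs_pow_succ_div_factorial_mul (fun s => (hseries s).summable) hr, ?_⟩
  have hmass : (stdGaussian k (tube {x | u ≤ ⟪x, z⟫} r)).toReal - (1 - stdNormalCDF u) =
      ∫ s in (0 : ℝ)..r, gaussianPDFReal 0 1 (u - s) := by
    rw [htube, stdGaussian_halfSpace hz, stdNormalCDF_eq_gaussianReal, ← measureReal_def,
      ← measureReal_Icc_eq (by linarith), gaussianReal_real_Icc 0 one_ne_zero (by linarith),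
      intervalIntegral.integral_comp_sub_left, sub_zero]
  rw [hmass]
  exact hasSum_integral_pow_succ_div_factorial_mul hseries hr
end

section
/- Let k ≥ 2 be an integer, let u₁, u₂ ∈ ℝ^k be orthonormal vectors, let a, b ∈ ℝ with a² + b² = 1, and set ν = −(a·u₁ + b·u₂). Then for every w ∈ ℝ^k and every integer m ≥ 0, the m-th derivative at t = 0 of the function t ↦ e^{−‖w + tν‖²/2} equals Σ_{l=0}^m binom(m,l) · a^{m−l} · b^l · H_{m−l}(⟨u₁, w⟩) · H_l(⟨u₂, w⟩) · e^{−‖w‖²/2}. -/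
open Real
open scoped RealInnerProductSpace

/-!
Write `x = ⟪u₁, w⟫`, `y = ⟪u₂, w⟫`. Since `u₁, u₂` are orthonormal,
`‖w - t (a u₁ + b u₂)‖² = (x - a t)² + (y - b t)² + (‖w‖² - x² - y²)`, so the Gaussian along the line
is a constant times the product of the one-dimensional Gaussians `e^{-(x - a t)²/2}` and
`e^{-(y - b t)²/2}`. By Rodrigues' formula the `n`-th derivative of `t ↦ e^{-(x - c t)²/2}` at `0`
is `cⁿ Hₙ(x) e^{-x²/2}`, and the Leibniz rule gives the binomial sum.
-/

theorem iteratedDeriv_gaussian (n : ℕ) (x : ℝ) :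
    iteratedDeriv n (fun s : ℝ => exp (-(s ^ 2 / 2))) x =
      (-1) ^ n * hermiteP n x * exp (-(x ^ 2 / 2)) := by
  rw [iteratedDeriv_eq_iterate, Polynomial.deriv_gaussian_eq_hermite_mul_gaussian, hermiteP]

theorem iteratedDeriv_gaussian_comp_sub_mul (n : ℕ) (x c t : ℝ) :
    iteratedDeriv n (fun t : ℝ => exp (-((x - c * t) ^ 2 / 2))) t =
      c ^ n * hermiteP n (x - c * t) * exp (-((x - c * t) ^ 2 / 2)) := by
  have hsmooth : ContDiff ℝ n (fun z : ℝ => exp (-((x - z) ^ 2 / 2))) := by fun_prop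
  rw [iteratedDeriv_comp_const_mul (f := fun z => exp (-((x - z) ^ 2 / 2))) hsmooth,
    iteratedDeriv_comp_const_sub n (fun s : ℝ => exp (-(s ^ 2 / 2)))]
  beta_reduce
  rw [smul_eq_mul, iteratedDeriv_gaussian, ← mul_assoc ((-1 : ℝ) ^ n), ← mul_assoc ((-1 : ℝ) ^ n),
    ← mul_pow, neg_mul_neg, mul_one, one_pow, one_mul, mul_assoc]

theorem iteratedDeriv_exp_neg_sum_sq_div_two (a b x y r : ℝ) (m : ℕ) :
    iteratedDeriv m (fun t : ℝ => exp (-((x - a * t) ^ 2 + (y - b * t) ^ 2 + r) / 2)) 0 =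
      ∑ l ∈ Finset.range (m + 1), (m.choose l : ℝ) * a ^ (m - l) * b ^ l *
        hermiteP (m - l) x * hermiteP l y * exp (-(x ^ 2 + y ^ 2 + r) / 2) := by
  have hfactor : (fun t : ℝ => exp (-((x - a * t) ^ 2 + (y - b * t) ^ 2 + r) / 2)) =
      fun t => exp (-(r / 2)) * (exp (-((y - b * t) ^ 2 / 2)) * exp (-((x - a * t) ^ 2 / 2))) := by
    funext t
    rw [← exp_add, ← exp_add]
    ring_nf
  have hexp : exp (-(x ^ 2 + y ^ 2 + r) / 2) =
      exp (-(r / 2)) * exp (-(y ^ 2 / 2)) * exp (-(x ^ 2 / 2)) := by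
    rw [← exp_add, ← exp_add]
    ring_nf
  rw [hfactor, iteratedDeriv_const_mul_field, iteratedDeriv_fun_mul (by fun_prop) (by fun_prop),
    Finset.mul_sum, hexp]
  refine Finset.sum_congr rfl fun l _ => ?_
  simp only [iteratedDeriv_gaussian_comp_sub_mul, mul_zero, sub_zero]
  ring

section InnerProductSpace

variable {E : Type*} [NormedAddCommGroup E] [InnerProductSpace ℝ E]

theorem norm_smul_add_smul_sq_of_orthonormal {u₁ u₂ : E} (hu₁ : ‖u₁‖ = 1) (hu₂ : ‖u₂‖ = 1)
    (hu₁₂ : ⟪u₁, u₂⟫ = 0) (a b : ℝ) : ‖a • u₁ + b • u₂‖ ^ 2 = a ^ 2 + b ^ 2 := by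
  rw [norm_add_sq_real, norm_smul, norm_smul, real_inner_smul_left, real_inner_smul_right, hu₁₂,
    hu₁, hu₂, Real.norm_eq_abs, Real.norm_eq_abs]
  simp only [mul_one, mul_zero, add_zero, sq_abs]

theorem norm_add_smul_neg_sq_of_orthonormal {u₁ u₂ : E} (hu₁ : ‖u₁‖ = 1) (hu₂ : ‖u₂‖ = 1)
    (hu₁₂ : ⟪u₁, u₂⟫ = 0) (a b t : ℝ) (w : E) :
    ‖w + t • (-(a • u₁ + b • u₂))‖ ^ 2 =
      (⟪u₁, w⟫ - a * t) ^ 2 + (⟪u₂, w⟫ - b * t) ^ 2 + (‖w‖ ^ 2 - ⟪u₁, w⟫ ^ 2 - ⟪u₂, w⟫ ^ 2) := by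
  rw [norm_add_sq_real, norm_smul, norm_neg, mul_pow,
    norm_smul_add_smul_sq_of_orthonormal hu₁ hu₂ hu₁₂, real_inner_smul_right, inner_neg_right,
    inner_add_right, real_inner_smul_right, real_inner_smul_right, real_inner_comm u₁ w,
    real_inner_comm u₂ w, Real.norm_eq_abs, sq_abs]
  ring

end InnerProductSpace

theorem stmt12_general (k : ℕ) (u₁ u₂ : EuclideanSpace ℝ (Fin k))
    (hu₁ : ‖u₁‖ = 1) (hu₂ : ‖u₂‖ = 1) (hu₁₂ : ⟪u₁, u₂⟫ = 0)
    (a b : ℝ) (w : EuclideanSpace ℝ (Fin k)) (m : ℕ) :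
    iteratedDeriv m
        (fun t : ℝ => Real.exp (-‖w + t • (-(a • u₁ + b • u₂))‖ ^ 2 / 2)) 0 =
      ∑ l ∈ Finset.range (m + 1),
        (Nat.choose m l : ℝ) * a ^ (m - l) * b ^ l *
          hermiteP (m - l) ⟪u₁, w⟫ * hermiteP l ⟪u₂, w⟫ * Real.exp (-‖w‖ ^ 2 / 2) := by
  have hw : ⟪u₁, w⟫ ^ 2 + ⟪u₂, w⟫ ^ 2 + (‖w‖ ^ 2 - ⟪u₁, w⟫ ^ 2 - ⟪u₂, w⟫ ^ 2) = ‖w‖ ^ 2 := by ring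
  simp_rw [norm_add_smul_neg_sq_of_orthonormal hu₁ hu₂ hu₁₂, iteratedDeriv_exp_neg_sum_sq_div_two, hw]

theorem stmt12 (k : ℕ) (hk : 2 ≤ k) (u₁ u₂ : EuclideanSpace ℝ (Fin k))
    (hu₁ : ‖u₁‖ = 1) (hu₂ : ‖u₂‖ = 1) (hu₁₂ : ⟪u₁, u₂⟫ = 0)
    (a b : ℝ) (hab : a ^ 2 + b ^ 2 = 1) (w : EuclideanSpace ℝ (Fin k)) (m : ℕ) :
    iteratedDeriv m
        (fun t : ℝ => Real.exp (-‖w + t • (-(a • u₁ + b • u₂))‖ ^ 2 / 2)) 0 =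
      ∑ l ∈ Finset.range (m + 1),
        (Nat.choose m l : ℝ) * a ^ (m - l) * b ^ l *
          hermiteP (m - l) ⟪u₁, w⟫ * hermiteP l ⟪u₂, w⟫ * Real.exp (-‖w‖ ^ 2 / 2) :=
  stmt12_general k u₁ u₂ hu₁ hu₂ hu₁₂ a b w m
end
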